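/- Let S³ = {h ∈ ℍ : |h| = 1} be the group of unit quaternions, acted on by the circle T¹ via t·h = t·h·t⁻¹, where t is a complex number of modulus 1 acting via the standard inclusion ℂ ⊂ ℍ. Then the orbit space S³/T¹ (the quotient by the equivalence h ~ t·h·t⁻¹) is homeomorphic to the closed 2-dimensional disk D². -/

import Mathlib

/-- The standard inclusion ℂ ⊂ ℍ : `z = a + b·i ↦ a + b·i ∈ ℍ`. -/
noncomputable def toQ (z : ℂ) : Quaternion ℝ := ⟨z.re, z.im, 0, 0⟩

/-- The group `S³` of unit quaternions. -/
abbrev S3 : Type := {h : Quaternion ℝ // ‖h‖ = 1}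

/-- `h ~ t·h·t⁻¹` for unit complex numbers `t`. -/
def rel17 (x y : S3) : Prop :=
  ∃ t : ℂ, ‖t‖ = 1 ∧ y.1 = toQ t * x.1 * (toQ t)⁻¹

/-!
Conjugation by a unit complex number `t` fixes the complex part `z` of `h = z + w j` and sends
`w` to `t² w`. Since `t ↦ t²` is onto the circle, two unit quaternions are conjugate exactly when
their complex parts agree, so `h ↦ z` identifies `S³/T¹` with the set of possible `z`, the closed
unit disk; a continuous bijection from a compact space to a Hausdorff one is a homeomorphism.
-/

open Quaternion

namespace Quaternion

/-- Writing `q = z + w j` with `z w : ℂ`, this is `w`. -/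
def imJK (q : ℍ) : ℂ := ⟨q.imJ, q.imK⟩

@[simp] lemma re_imJK (q : ℍ) : (imJK q).re = q.imJ := rfl
@[simp] lemma im_imJK (q : ℍ) : (imJK q).im = q.imK := rfl

lemma normSq_eq_add_normSq_imJK (q : ℍ) :
    normSq q = q.re ^ 2 + q.imI ^ 2 + Complex.normSq (imJK q) := by
  rw [normSq_def', Complex.normSq_apply]; simp only [re_imJK, im_imJK]; ring

lemma ext_imJK {p q : ℍ} (hre : p.re = q.re) (himI : p.imI = q.imI) (himJK : imJK p = imJK q) :
    p = q :=
  Quaternion.ext _ _ hre himI (congrArg Complex.re himJK) (congrArg Complex.im himJK)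

lemma normSq_coeComplex (z : ℂ) : normSq (z : ℍ) = Complex.normSq z := by
  rw [normSq_def', Complex.normSq_apply, re_coeComplex, imI_coeComplex, imJ_coeComplex,
    imK_coeComplex]
  ring

lemma inv_coeComplex_of_norm_eq_one {t : ℂ} (ht : ‖t‖ = 1) : (t : ℍ)⁻¹ = star (t : ℍ) := by
  refine inv_eq_of_mul_eq_one_right ?_
  have hnormSq : normSq (t : ℍ) = 1 := by
    rw [normSq_coeComplex, Complex.normSq_eq_norm_sq, ht, one_pow]
  rw [self_mul_star, hnormSq, coe_one]

lemma re_coeComplex_mul_mul_star (t : ℂ) (q : ℍ) :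
    ((t : ℍ) * q * star (t : ℍ)).re = Complex.normSq t * q.re := by
  simp only [re_mul, imI_mul, imJ_mul, imK_mul, re_star, imI_star, imJ_star, imK_star,
    re_coeComplex, imI_coeComplex, imJ_coeComplex, imK_coeComplex, Complex.normSq_apply]
  ring

lemma imI_coeComplex_mul_mul_star (t : ℂ) (q : ℍ) :
    ((t : ℍ) * q * star (t : ℍ)).imI = Complex.normSq t * q.imI := by
  simp only [re_mul, imI_mul, imJ_mul, imK_mul, re_star, imI_star, imJ_star, imK_star,
    re_coeComplex, imI_coeComplex, imJ_coeComplex, imK_coeComplex, Complex.normSq_apply]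
  ring

lemma imJK_coeComplex_mul_mul_star (t : ℂ) (q : ℍ) :
    imJK ((t : ℍ) * q * star (t : ℍ)) = t ^ 2 * imJK q := by
  apply Complex.ext <;>
  · simp only [re_imJK, im_imJK, pow_two, Complex.mul_re, Complex.mul_im, re_mul, imI_mul,
      imJ_mul, imK_mul, re_star, imI_star, imJ_star, imK_star, re_coeComplex, imI_coeComplex,
      imJ_coeComplex, imK_coeComplex]
    ring

lemma norm_eq_one_iff_normSq_eq_one {q : ℍ} : ‖q‖ = 1 ↔ normSq q = 1 := by
  rw [normSq_eq_norm_mul_self, ← sq, pow_eq_one_iff_of_nonneg (norm_nonneg q) two_ne_zero]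

lemma coeComplex_mul_mul_inv_eq_iff {t : ℂ} (ht : ‖t‖ = 1) {p q : ℍ} :
    (t : ℍ) * p * (t : ℍ)⁻¹ = q ↔ p.re = q.re ∧ p.imI = q.imI ∧ t ^ 2 * imJK p = imJK q := by
  have hnt : Complex.normSq t = 1 := by rw [Complex.normSq_eq_norm_sq, ht, one_pow]
  rw [inv_coeComplex_of_norm_eq_one ht]
  constructor
  · rintro rfl
    simp only [re_coeComplex_mul_mul_star, imI_coeComplex_mul_mul_star,
      imJK_coeComplex_mul_mul_star, hnt, one_mul, and_self]
  · rintro ⟨hre, himI, himJK⟩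
    apply ext_imJK <;>
      simp only [re_coeComplex_mul_mul_star, imI_coeComplex_mul_mul_star,
        imJK_coeComplex_mul_mul_star, hnt, one_mul, hre, himI, himJK]

end Quaternion

lemma Complex.exists_norm_eq_one_sq_mul_eq {u v : ℂ} (h : ‖u‖ = ‖v‖) :
    ∃ t : ℂ, ‖t‖ = 1 ∧ t ^ 2 * u = v := by
  rcases eq_or_ne u 0 with rfl | hu
  · exact ⟨1, by simp, by simpa using (norm_eq_zero.mp (h.symm.trans norm_zero)).symm⟩
  obtain ⟨t, ht⟩ := IsAlgClosed.exists_pow_nat_eq (v / u) two_pos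
  refine ⟨t, ?_, by rw [ht, div_mul_cancel₀ _ hu]⟩
  have hsq : ‖t‖ ^ 2 = 1 := by
    rw [← norm_pow, ht, norm_div, h, div_self (h ▸ norm_ne_zero_iff.mpr hu)]
  exact (pow_eq_one_iff_of_nonneg (norm_nonneg t) two_ne_zero).mp hsq

noncomputable def Quot.homeomorphOfFibers {X Y : Type*} [TopologicalSpace X] [CompactSpace X]
    [TopologicalSpace Y] [T2Space Y] {r : X → X → Prop} {f : X → Y} (hf : Continuous f)
    (hsurj : Function.Surjective f) (hr : ∀ a b, r a b ↔ f a = f b) : Quot r ≃ₜ Y :=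
  have hbij : Function.Bijective (Quot.lift f fun a b => (hr a b).mp) :=
    ⟨by rintro ⟨a⟩ ⟨b⟩ h; exact Quot.sound ((hr a b).mpr h),
      fun y => (hsurj y).elim fun a ha => ⟨Quot.mk r a, ha⟩⟩
  Continuous.homeoOfEquivCompactToT2 (f := Equiv.ofBijective _ hbij) (continuous_quot_lift _ hf)

lemma toQ_eq_coe (z : ℂ) : toQ z = z := rfl

lemma rel17_iff {x y : S3} : rel17 x y ↔ x.1.re = y.1.re ∧ x.1.imI = y.1.imI := by
  have hnormSq (z : S3) : normSq z.1 = 1 := norm_eq_one_iff_normSq_eq_one.mp z.2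
  simp only [rel17, toQ_eq_coe]
  constructor
  · rintro ⟨t, ht, hy⟩
    obtain ⟨hre, himI, -⟩ := (coeComplex_mul_mul_inv_eq_iff ht).mp hy.symm
    exact ⟨hre, himI⟩
  · rintro ⟨hre, himI⟩
    have himJK : ‖imJK x.1‖ = ‖imJK y.1‖ := by
      have hx := hnormSq x
      have hy := hnormSq y
      rw [normSq_eq_add_normSq_imJK, Complex.normSq_eq_norm_sq] at hx hy
      rw [hre, himI] at hx
      exact (pow_left_inj₀ (norm_nonneg _) (norm_nonneg _) two_ne_zero).mp (by linarith)
    obtain ⟨t, ht, htimJK⟩ := Complex.exists_norm_eq_one_sq_mul_eq himJK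
    exact ⟨t, ht, ((coeComplex_mul_mul_inv_eq_iff ht).mpr ⟨hre, himI, htimJK⟩).symm⟩

instance : CompactSpace S3 := by
  have hsphere : Metric.sphere (0 : ℍ) 1 = {h | ‖h‖ = 1} := by ext; simp
  have hcompact : IsCompact {h : ℍ | ‖h‖ = 1} := hsphere ▸ isCompact_sphere 0 1
  exact isCompact_iff_compactSpace.mp hcompact

lemma norm_sq_toLp_two (a b : ℝ) : ‖!₂[a, b]‖ ^ 2 = a ^ 2 + b ^ 2 := by
  simp [EuclideanSpace.real_norm_sq_eq, Fin.sum_univ_two]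

noncomputable def S3.toDisk (h : S3) : Metric.closedBall (0 : EuclideanSpace ℝ (Fin 2)) 1 :=
  ⟨!₂[h.1.re, h.1.imI], by
    have h1 := norm_eq_one_iff_normSq_eq_one.mp h.2
    rw [normSq_eq_add_normSq_imJK] at h1
    rw [mem_closedBall_zero_iff, ← sq_le_one_iff₀ (norm_nonneg _), norm_sq_toLp_two]
    linarith [Complex.normSq_nonneg (imJK h.1)]⟩

attribute [local fun_prop] Quaternion.continuous_re Quaternion.continuous_imI in
lemma S3.continuous_toDisk : Continuous S3.toDisk := by
  unfold S3.toDisk; fun_prop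

lemma S3.toDisk_eq_iff {x y : S3} :
    x.toDisk = y.toDisk ↔ x.1.re = y.1.re ∧ x.1.imI = y.1.imI := by
  simp [S3.toDisk]

lemma S3.surjective_toDisk : Function.Surjective S3.toDisk := by
  rintro ⟨p, hp⟩
  rw [mem_closedBall_zero_iff, ← sq_le_one_iff₀ (norm_nonneg _), EuclideanSpace.real_norm_sq_eq,
    Fin.sum_univ_two] at hp
  let q : ℍ := ⟨p 0, p 1, √(1 - p 0 ^ 2 - p 1 ^ 2), 0⟩
  have hq : ‖q‖ = 1 := by
    rw [norm_eq_one_iff_normSq_eq_one, normSq_def']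
    simp only [q, Real.sq_sqrt (by linarith : 0 ≤ 1 - p 0 ^ 2 - p 1 ^ 2)]
    ring
  exact ⟨⟨q, hq⟩, Subtype.ext <| by ext i; fin_cases i <;> rfl⟩

/-- The orbit space `S³/T¹` of the conjugation action `t·h = t h t⁻¹` is a closed 2-disk. -/
theorem S3_quotient_conjugation_homeomorphic_D2 :
    Nonempty (Quot rel17 ≃ₜ Metric.closedBall (0 : EuclideanSpace ℝ (Fin 2)) 1) :=
  ⟨Quot.homeomorphOfFibers S3.continuous_toDisk S3.surjective_toDisk
    fun _ _ => rel17_iff.trans S3.toDisk_eq_iff.symm⟩
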